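/- If S and T are bounded linear operators on H = L²(ℝ, μ) each of which commutes with the orthogonal projections onto S_t⁺ and onto S_t⁻ for every t ∈ ℝ, then S T = T S. (The commutant of the nest 𝒩₁ is abelian; hence the von Neumann algebra generated by the nest projections is a maximal abelian selfadjoint algebra.) -/

import Mathlib

/-
The indicators `e q` of the rationals span a dense subspace of `H`, and every vector of
`S_q⁺ ⊓ (S_q⁻)ᗮ` is a multiple of `e q`. An operator commuting with the projections onto `S_q⁺`
and `S_q⁻` leaves `S_q⁺` and `(S_q⁻)ᗮ` invariant, so every `e q` is an eigenvector of it, and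
operators with a common total family of eigenvectors commute.
-/

open MeasureTheory

/-- The closed subspace of `L²(ν)` of functions vanishing `ν`-a.e. on the set `s`. -/
noncomputable def vanishOn (ν : Measure ℝ) (s : Set ℝ) : Submodule ℂ (Lp ℂ 2 ν) where
  carrier := {f | (f : ℝ → ℂ) =ᵐ[ν.restrict s] 0}
  add_mem' := by
    intro f g hf hg
    filter_upwards [hf, hg, ae_restrict_of_ae (Lp.coeFn_add f g)] with x hfx hgx hx
    show (↑↑(f + g) : ℝ → ℂ) x = 0
    rw [hx]
    simp only [Pi.add_apply]
    simp [hfx, hgx]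
  zero_mem' := by
    filter_upwards [ae_restrict_of_ae (Lp.coeFn_zero ℂ 2 ν)] with x hx
    show (↑↑(0 : Lp ℂ 2 ν) : ℝ → ℂ) x = 0
    simpa using hx
  smul_mem' := by
    intro c f hf
    filter_upwards [hf, ae_restrict_of_ae (Lp.coeFn_smul c f)] with x hfx hx
    show (↑↑(c • f) : ℝ → ℂ) x = 0
    rw [hx]
    simp [hfx]

/-- The measure `μ = ∑_{q ∈ ℚ} δ_q` on the Borel σ-algebra of `ℝ`. -/
noncomputable def mu : Measure ℝ := Measure.sum fun q : ℚ => Measure.dirac (q : ℝ)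

lemma mu_singleton_ne_top (x : ℝ) : mu {x} ≠ ⊤ := by
  have h : mu {x} = ∑' q : ℚ, Measure.dirac (q : ℝ) {x} :=
    Measure.sum_apply _ (measurableSet_singleton x)
  rw [h]
  by_cases hx : ∃ q : ℚ, (q : ℝ) = x
  · obtain ⟨q₀, hq₀⟩ := hx
    have hs : ∀ q : ℚ, q ≠ q₀ → Measure.dirac (q : ℝ) {x} = 0 := by
      intro q hq
      rw [Measure.dirac_apply]
      have : (q : ℝ) ≠ x := by
        intro h'
        exact hq (by exact_mod_cast hq₀ ▸ h')
      simp [Set.indicator, this]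
    rw [tsum_eq_single q₀ hs, Measure.dirac_apply]
    simp [Set.indicator, hq₀]
  · have hs : ∀ q : ℚ, Measure.dirac (q : ℝ) {x} = 0 := by
      intro q
      rw [Measure.dirac_apply]
      have : (q : ℝ) ≠ x := fun h' => hx ⟨q, h'⟩
      simp [Set.indicator, this]
    simp [hs]

/-- `e q` is the indicator function of the singleton `{q}` as an element of `H = L²(ℝ, μ)`. -/
noncomputable def e (q : ℚ) : Lp ℂ 2 mu :=
  indicatorConstLp 2 (measurableSet_singleton (q : ℝ)) (mu_singleton_ne_top _) (1 : ℂ)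

/-- The subspace `S_t⁺ = {f ∈ L²(μ) : f = 0 μ-a.e. on (t, ∞)}`. -/
noncomputable def Splus (t : ℝ) : Submodule ℂ (Lp ℂ 2 mu) := vanishOn mu (Set.Ioi t)

/-- The subspace `S_t⁻ = {f ∈ L²(μ) : f = 0 μ-a.e. on [t, ∞)}`. -/
noncomputable def Sminus (t : ℝ) : Submodule ℂ (Lp ℂ 2 mu) := vanishOn mu (Set.Ici t)

/-- The subspace `N_t = {f ∈ L²(λ) : f = 0 λ-a.e. on (t, ∞)}` of `K = L²(ℝ, λ)`,
where `λ` is Lebesgue measure. -/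
noncomputable def Nt (t : ℝ) : Submodule ℂ (Lp ℂ 2 (volume : Measure ℝ)) :=
  vanishOn volume (Set.Ioi t)

open scoped InnerProductSpace

section OrthogonalProjection

variable {𝕜 E : Type*} [RCLike 𝕜] [NormedAddCommGroup E] [InnerProductSpace 𝕜 E]

def IsOrthogonalProjection (K : Submodule 𝕜 E) (P : E →L[𝕜] E) : Prop :=
  ∀ x, P x ∈ K ∧ x - P x ∈ Kᗮ

namespace IsOrthogonalProjection

variable {K : Submodule 𝕜 E} {P R : E →L[𝕜] E}

lemma apply_of_mem (hP : IsOrthogonalProjection K P) {x : E} (hx : x ∈ K) : P x = x := by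
  have hmem : x - P x ∈ K ⊓ Kᗮ := ⟨K.sub_mem hx (hP x).1, (hP x).2⟩
  rw [K.inf_orthogonal_eq_bot, Submodule.mem_bot, sub_eq_zero] at hmem
  exact hmem.symm

lemma apply_of_mem_orthogonal (hP : IsOrthogonalProjection K P) {x : E} (hx : x ∈ Kᗮ) :
    P x = 0 := by
  have hmem : P x ∈ K ⊓ Kᗮ := ⟨(hP x).1, by simpa using Kᗮ.sub_mem hx (hP x).2⟩
  rwa [K.inf_orthogonal_eq_bot, Submodule.mem_bot] at hmem

lemma apply_mem_of_comp_eq (hP : IsOrthogonalProjection K P) (hR : R.comp P = P.comp R)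
    {x : E} (hx : x ∈ K) : R x ∈ K := by
  rw [← hP.apply_of_mem hx, ← ContinuousLinearMap.comp_apply, hR]
  exact (hP _).1

lemma apply_mem_orthogonal_of_comp_eq (hP : IsOrthogonalProjection K P)
    (hR : R.comp P = P.comp R) {x : E} (hx : x ∈ Kᗮ) : R x ∈ Kᗮ := by
  have hPR : P (R x) = 0 := by
    rw [← ContinuousLinearMap.comp_apply, ← hR, ContinuousLinearMap.comp_apply,
      hP.apply_of_mem_orthogonal hx, map_zero]
  simpa [hPR] using (hP (R x)).2

end IsOrthogonalProjection

end OrthogonalProjection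

lemma ContinuousLinearMap.comp_comm_of_dense_span_eigenvectors {𝕜 E ι : Type*} [Field 𝕜]
    [TopologicalSpace 𝕜] [AddCommGroup E] [Module 𝕜 E] [TopologicalSpace E] [T2Space E]
    [ContinuousSMul 𝕜 E] {v : ι → E} (hv : Dense (Submodule.span 𝕜 (Set.range v) : Set E))
    {S T : E →L[𝕜] E} (hS : ∀ i, ∃ c : 𝕜, S (v i) = c • v i)
    (hT : ∀ i, ∃ c : 𝕜, T (v i) = c • v i) :
    S.comp T = T.comp S := by
  refine ContinuousLinearMap.ext_on hv ?_
  rintro _ ⟨i, rfl⟩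
  obtain ⟨a, ha⟩ := hS i
  obtain ⟨b, hb⟩ := hT i
  simp only [ContinuousLinearMap.comp_apply, ha, hb, map_smul, smul_smul, mul_comm]

lemma ae_mu_iff {p : ℝ → Prop} : (∀ᵐ x ∂mu, p x) ↔ ∀ q : ℚ, p q := by
  simp [mu]

lemma Lp_mu_ext {f g : Lp ℂ 2 mu} (h : ∀ q : ℚ, f q = g q) : f = g :=
  Lp.ext (ae_mu_iff.mpr h)

lemma mu_singleton (q : ℚ) : mu {(q : ℝ)} = 1 := by
  rw [mu, Measure.sum_apply _ (measurableSet_singleton _), tsum_eq_single q]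
  · simp
  · intro p hp
    simp [Rat.cast_injective.ne hp]

lemma e_apply (p q : ℚ) : e q p = if p = q then 1 else 0 := by
  rw [e, ae_mu_iff.mp indicatorConstLp_coeFn p]
  simp [Set.indicator]

lemma inner_e (q : ℚ) (f : Lp ℂ 2 mu) : ⟪e q, f⟫_ℂ = f q := by
  rw [e, L2.inner_indicatorConstLp_eq_setIntegral_inner, integral_singleton, measureReal_def,
    mu_singleton]
  simp

lemma mem_vanishOn_mu_iff {s : Set ℝ} (hs : MeasurableSet s) {f : Lp ℂ 2 mu} :
    f ∈ vanishOn mu s ↔ ∀ q : ℚ, (q : ℝ) ∈ s → f q = 0 := by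
  change (f : ℝ → ℂ) =ᵐ[mu.restrict s] 0 ↔ _
  rw [Filter.EventuallyEq, ae_restrict_iff' hs, ae_mu_iff]
  simp

lemma mem_Splus_iff {t : ℝ} {f : Lp ℂ 2 mu} : f ∈ Splus t ↔ ∀ q : ℚ, t < q → f q = 0 :=
  mem_vanishOn_mu_iff measurableSet_Ioi

lemma mem_Sminus_iff {t : ℝ} {f : Lp ℂ 2 mu} : f ∈ Sminus t ↔ ∀ q : ℚ, t ≤ q → f q = 0 :=
  mem_vanishOn_mu_iff measurableSet_Ici

lemma e_mem_Splus (q : ℚ) : e q ∈ Splus q :=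
  mem_Splus_iff.mpr fun p hp => by simp [e_apply, (Rat.cast_lt.mp hp).ne']

lemma e_mem_Sminus {q : ℚ} {t : ℝ} (h : (q : ℝ) < t) : e q ∈ Sminus t :=
  mem_Sminus_iff.mpr fun p hp => by
    simp [e_apply, (Rat.cast_lt.mp (h.trans_le hp)).ne']

lemma e_mem_orthogonal_Sminus (q : ℚ) : e q ∈ (Sminus q)ᗮ :=
  (Submodule.mem_orthogonal' _ _).mpr fun f hf => by
    rw [inner_e, mem_Sminus_iff.mp hf q le_rfl]

lemma apply_eq_zero_of_mem_orthogonal_Sminus {t : ℝ} {f : Lp ℂ 2 mu} (hf : f ∈ (Sminus t)ᗮ)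
    {q : ℚ} (hq : (q : ℝ) < t) : f q = 0 := by
  rw [← inner_e]
  exact Submodule.inner_right_of_mem_orthogonal (e_mem_Sminus hq) hf

lemma eq_smul_e_of_mem {q : ℚ} {f : Lp ℂ 2 mu} (hplus : f ∈ Splus q)
    (hminus : f ∈ (Sminus q)ᗮ) : f = f q • e q := by
  refine Lp_mu_ext fun p => ?_
  rw [ae_mu_iff.mp (Lp.coeFn_smul _ _) p, Pi.smul_apply, e_apply]
  rcases lt_trichotomy p q with h | rfl | h
  · simp [apply_eq_zero_of_mem_orthogonal_Sminus hminus (Rat.cast_lt.mpr h), h.ne]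
  · simp
  · simp [mem_Splus_iff.mp hplus p (Rat.cast_lt.mpr h), h.ne']

lemma dense_span_e : Dense (Submodule.span ℂ (Set.range e) : Set (Lp ℂ 2 mu)) := by
  rw [Submodule.dense_iff_topologicalClosure_eq_top, Submodule.topologicalClosure_eq_top_iff,
    Submodule.eq_bot_iff]
  intro f hf
  refine Lp_mu_ext fun q => ?_
  rw [← inner_e, (Submodule.mem_orthogonal _ f).mp hf _ (Submodule.subset_span ⟨q, rfl⟩)]
  exact (ae_mu_iff.mp (Lp.coeFn_zero ℂ 2 mu) q).symm

lemma exists_apply_e_eq_smul {q : ℚ} {Pplus Pminus R : Lp ℂ 2 mu →L[ℂ] Lp ℂ 2 mu}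
    (hplus : IsOrthogonalProjection (Splus q) Pplus)
    (hminus : IsOrthogonalProjection (Sminus q) Pminus)
    (hRplus : R.comp Pplus = Pplus.comp R) (hRminus : R.comp Pminus = Pminus.comp R) :
    ∃ c : ℂ, R (e q) = c • e q :=
  ⟨_, eq_smul_e_of_mem (hplus.apply_mem_of_comp_eq hRplus (e_mem_Splus q))
    (hminus.apply_mem_orthogonal_of_comp_eq hRminus (e_mem_orthogonal_Sminus q))⟩

/-- If two bounded operators on `H = L²(ℝ, μ)` each commute with the orthogonal
projections onto `S_t⁺` and `S_t⁻` for every `t`, then they commute with each other: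
the commutant of the nest `𝒩₁` is abelian. Here `Pp t` (resp. `Pm t`) is the
orthogonal projection onto `S_t⁺` (resp. `S_t⁻`). -/
theorem commutant_of_nest_one_abelian
    (Pp Pm : ℝ → (Lp ℂ 2 mu →L[ℂ] Lp ℂ 2 mu))
    (hPp : ∀ t f, Pp t f ∈ Splus t ∧ f - Pp t f ∈ (Splus t)ᗮ)
    (hPm : ∀ t f, Pm t f ∈ Sminus t ∧ f - Pm t f ∈ (Sminus t)ᗮ)
    (S T : Lp ℂ 2 mu →L[ℂ] Lp ℂ 2 mu)
    (hS : (∀ t : ℝ, S.comp (Pp t) = (Pp t).comp S) ∧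
        (∀ t : ℝ, S.comp (Pm t) = (Pm t).comp S))
    (hT : (∀ t : ℝ, T.comp (Pp t) = (Pp t).comp T) ∧
        (∀ t : ℝ, T.comp (Pm t) = (Pm t).comp T)) :
    S.comp T = T.comp S :=
  ContinuousLinearMap.comp_comm_of_dense_span_eigenvectors dense_span_e
    (fun q => exists_apply_e_eq_smul (hPp q) (hPm q) (hS.1 q) (hS.2 q))
    (fun q => exists_apply_e_eq_smul (hPp q) (hPm q) (hT.1 q) (hT.2 q))
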